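/- Let P be a finite set of points in the plane in general position, and let u, w ∈ P be distinct points such that w lies in the cone C₀ᵘ with clockwise angle α ∈ (0, π/5) from the direction (0,1) to w − u (so u ∈ C₃ʷ), and such that |T_{w,u}| ≥ |T_{u,w}|. Let v ∈ P be the point closest to w in the cone C₃ʷ, i.e. the unique minimizer of ⟨v − w, b₃⟩ over P ∩ C₃ʷ, and suppose v ≠ u. Then the canonical triangle of u and v satisfies |T_{u,v}| < |T_{u,w}|. -/

import Mathlib

/-!
The cone `C₃ʷ` is bounded by the rays from `w` along `-b₀` and `-b₁`, so `w - v = a b₀ + b b₁`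
with `a, b > 0`; since `u ∈ C₃ʷ`, minimality of `v` gives `(a + b) cos (π/5) ≤ ⟨u - w, b₃⟩`,
i.e. `v` lies in `T_{w,u}`. Writing `w - u = r (sin α, cos α)`, the sizes are
`|T_{u,w}| = r cos α / cos (π/5)` and `|T_{w,u}| = r cos (π/5 - α) / cos (π/5)`, so the size
hypothesis says `α ≥ π/10`. For such `α` the part of `T_{w,u}` inside the open cone `C₃ʷ` lies in
the open regular pentagon `{p | ⟨p - u, bⱼ⟩ < ⟨w - u, b₀⟩ for all j}`, which is the claim.
-/

noncomputable section

/-- The plane ℝ². -/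
abbrev Plane : Type := EuclideanSpace ℝ (Fin 2)

/-- The bisector direction of the `i`-th cone: the unit vector obtained by rotating `(0,1)`
clockwise by `i · 2π/5`. -/
noncomputable def coneDir (i : Fin 5) : Plane :=
  !₂[Real.sin ((i : ℕ) * (2 * Real.pi / 5)), Real.cos ((i : ℕ) * (2 * Real.pi / 5))]

/-- The cone `Cᵢᵘ`: all points `p ≠ u` such that the angle between `p - u` and the
bisector direction `coneDir i` is less than `π/5`. -/
def cone (u : Plane) (i : Fin 5) : Set Plane :=
  {p | p ≠ u ∧ InnerProductGeometry.angle (p - u) (coneDir i) < Real.pi / 5}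

/-- A set of points is in general position if no difference of two distinct points makes an
angle that is an integer multiple of `π/5` with either coordinate axis. -/
def GeneralPosition (P : Set Plane) : Prop :=
  ∀ p ∈ P, ∀ q ∈ P, p ≠ q → ∀ k : ℤ,
    (p - q) 0 * Real.cos (k * (Real.pi / 5)) - (p - q) 1 * Real.sin (k * (Real.pi / 5)) ≠ 0 ∧
    (p - q) 0 * Real.sin (k * (Real.pi / 5)) + (p - q) 1 * Real.cos (k * (Real.pi / 5)) ≠ 0

/-- `v` is the point of `P` in the cone `Cᵢᵘ` that is closest to `u`, where distance is
measured by projection onto the bisector of the cone. -/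
def isClosest (P : Set Plane) (u : Plane) (i : Fin 5) (v : Plane) : Prop :=
  v ∈ P ∧ v ∈ cone u i ∧
    ∀ p ∈ P, p ∈ cone u i → (inner ℝ (v - u) (coneDir i) : ℝ) ≤ inner ℝ (p - u) (coneDir i)

/-- The θ₅-graph of a point set `P`: each `u ∈ P` is joined to the closest point of `P`
in each of its five cones. -/
def thetaGraph (P : Set Plane) : SimpleGraph Plane where
  Adj u v := u ∈ P ∧ v ∈ P ∧ u ≠ v ∧
    ((∃ i, isClosest P u i v) ∨ (∃ i, isClosest P v i u))
  symm := by
    constructor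
    rintro u v ⟨hu, hv, hne, h⟩
    exact ⟨hv, hu, hne.symm, h.symm⟩
  loopless := by
    constructor
    rintro u ⟨-, -, hne, -⟩
    exact hne rfl

/-- The Euclidean length of a walk in the θ₅-graph. -/
noncomputable def walkLength {P : Set Plane} {u v : Plane} (p : (thetaGraph P).Walk u v) : ℝ :=
  (p.darts.map fun d => dist d.toProd.1 d.toProd.2).sum

/-- The canonical triangle `T_{u,w}` (for `w ∈ Cᵢᵘ`): the closed triangle bounded by the two
boundary rays of `Cᵢᵘ` and the line through `w` perpendicular to the bisector of the cone. -/
def canonicalTriangle (u w : Plane) (i : Fin 5) : Set Plane :=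
  {p | (p = u ∨ InnerProductGeometry.angle (p - u) (coneDir i) ≤ Real.pi / 5) ∧
       (inner ℝ (p - u) (coneDir i) : ℝ) ≤ inner ℝ (w - u) (coneDir i)}

/-- The size `|T_{u,w}|` of the canonical triangle, i.e. the length of each of the two sides
incident to the apex `u`. -/
noncomputable def triangleSize (u w : Plane) (i : Fin 5) : ℝ :=
  (inner ℝ (w - u) (coneDir i) : ℝ) / Real.cos (Real.pi / 5)

open Real InnerProductGeometry
open scoped InnerProductSpace

lemma inner_plane (x y : Plane) : ⟪x, y⟫_ℝ = x 0 * y 0 + x 1 * y 1 := by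
  simp [PiLp.inner_apply, Fin.sum_univ_two, mul_comm]

lemma norm_sin_cos (θ : ℝ) : ‖(!₂[sin θ, cos θ] : Plane)‖ = 1 := by
  simp [EuclideanSpace.norm_eq, Fin.sum_univ_two]

lemma angle_lt_iff_cos_mul_lt_inner {V : Type*} [NormedAddCommGroup V] [InnerProductSpace ℝ V]
    {x y : V} (hx : x ≠ 0) (hy : y ≠ 0) {θ : ℝ} (hθ₀ : 0 ≤ θ) (hθ : θ ≤ π) :
    angle x y < θ ↔ cos θ * (‖x‖ * ‖y‖) < ⟪x, y⟫_ℝ := by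
  rw [← cos_angle_mul_norm_mul_norm, mul_lt_mul_iff_left₀ (by positivity)]
  exact (strictAntiOn_cos.lt_iff_gt ⟨hθ₀, hθ⟩ ⟨angle_nonneg x y, angle_le_pi x y⟩).symm

lemma four_mul_cos_pi_div_five_sq : 4 * cos (π / 5) ^ 2 = 2 * cos (π / 5) + 1 := by
  linear_combination quadratic_root_cos_pi_div_five

lemma three_quarters_lt_cos_pi_div_five : 3 / 4 < cos (π / 5) := by
  have hc : 0 < cos (π / 5) := cos_pi_div_five ▸ by positivity
  nlinarith [four_mul_cos_pi_div_five_sq]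

lemma sin_pi_div_five_pos : 0 < sin (π / 5) :=
  sin_pos_of_pos_of_lt_pi (by positivity) (by linarith [pi_pos])

lemma coneDir_zero : coneDir 0 = !₂[0, 1] := by
  simp [coneDir]

lemma coneDir_one : coneDir 1 = !₂[2 * sin (π / 5) * cos (π / 5), 2 * cos (π / 5) ^ 2 - 1] := by
  simp only [coneDir, Fin.val_one, Nat.cast_one, one_mul]
  rw [show 2 * π / 5 = 2 * (π / 5) by ring, sin_two_mul, cos_two_mul]

lemma coneDir_two : coneDir 2 = !₂[sin (π / 5), -cos (π / 5)] := by
  simp only [coneDir, Fin.val_two, Nat.cast_ofNat]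
  rw [show 2 * (2 * π / 5) = π - π / 5 by ring, sin_pi_sub, cos_pi_sub]

lemma coneDir_three : coneDir 3 = !₂[-sin (π / 5), -cos (π / 5)] := by
  simp only [coneDir, show ((3 : Fin 5) : ℕ) = 3 from rfl]
  rw [show ((3 : ℕ) : ℝ) * (2 * π / 5) = π / 5 + π by push_cast; ring, sin_add_pi, cos_add_pi]

lemma coneDir_four :
    coneDir 4 = !₂[-(2 * sin (π / 5) * cos (π / 5)), 2 * cos (π / 5) ^ 2 - 1] := by
  simp only [coneDir, show ((4 : Fin 5) : ℕ) = 4 from rfl]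
  rw [show ((4 : ℕ) : ℝ) * (2 * π / 5) = -(2 * (π / 5)) + 2 * π by push_cast; ring,
    sin_add_two_pi, cos_add_two_pi, sin_neg, cos_neg, sin_two_mul, cos_two_mul]

lemma norm_coneDir (i : Fin 5) : ‖coneDir i‖ = 1 :=
  norm_sin_cos _

lemma inner_sin_cos_coneDir_zero (α : ℝ) : ⟪(!₂[sin α, cos α] : Plane), coneDir 0⟫_ℝ = cos α := by
  simp only [inner_plane, coneDir_zero, Matrix.cons_val_zero, Matrix.cons_val_one,
    Matrix.cons_val_fin_one, mul_zero, mul_one, zero_add]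

lemma inner_sin_cos_coneDir_three (α : ℝ) :
    ⟪(!₂[sin α, cos α] : Plane), coneDir 3⟫_ℝ = -cos (π / 5 - α) := by
  simp only [inner_plane, coneDir_three, cos_sub, Matrix.cons_val_zero, Matrix.cons_val_one,
    Matrix.cons_val_fin_one]
  ring

lemma inner_smul_add_smul_coneDir_three (a b : ℝ) :
    ⟪a • coneDir 0 + b • coneDir 1, coneDir 3⟫_ℝ = -((a + b) * cos (π / 5)) := by
  simp only [inner_plane, coneDir_zero, coneDir_one, coneDir_three, PiLp.add_apply,
    PiLp.smul_apply, smul_eq_mul, Matrix.cons_val_zero, Matrix.cons_val_one,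
    Matrix.cons_val_fin_one]
  linear_combination -2 * b * cos (π / 5) * sin_sq_add_cos_sq (π / 5)

lemma mem_cone_iff {u p : Plane} {i : Fin 5} :
    p ∈ cone u i ↔ p ≠ u ∧ cos (π / 5) * ‖p - u‖ < ⟪p - u, coneDir i⟫_ℝ := by
  have hi : coneDir i ≠ 0 := norm_ne_zero_iff.1 (by simp [norm_coneDir])
  refine and_congr_right fun hp => ?_
  rw [angle_lt_iff_cos_mul_lt_inner (sub_ne_zero.2 hp) hi (by positivity) (by linarith [pi_pos]),
    norm_coneDir, mul_one]

lemma mem_cone_three_of_sub_eq {u w : Plane} {α r : ℝ} (hα₀ : 0 < α) (hα : α < 2 * π / 5)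
    (hr : 0 < r) (hwu : w - u = r • !₂[sin α, cos α]) : u ∈ cone w 3 := by
  have hnorm : ‖u - w‖ = r := by
    rw [← neg_sub, norm_neg, hwu, norm_smul, norm_sin_cos, mul_one, norm_of_nonneg hr.le]
  refine mem_cone_iff.2 ⟨fun h => by simp [h] at hnorm; linarith, ?_⟩
  rw [hnorm, ← neg_sub, hwu, inner_neg_left, real_inner_smul_left, inner_sin_cos_coneDir_three,
    mul_neg, neg_neg, mul_comm, ← cos_abs (π / 5 - α)]
  gcongr
  exact cos_lt_cos_of_nonneg_of_le_pi (abs_nonneg _) (by linarith [pi_pos])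
    (abs_sub_lt_iff.2 ⟨by linarith, by linarith⟩)

lemma exists_pos_smul_add_smul_of_mem_cone_three {w v : Plane} (h : v ∈ cone w 3) :
    ∃ a b : ℝ, 0 < a ∧ 0 < b ∧ w - v = a • coneDir 0 + b • coneDir 1 := by
  obtain ⟨-, hlt⟩ := mem_cone_iff.1 h
  have hnorm : ‖v - w‖ ^ 2 = (v - w) 0 ^ 2 + (v - w) 1 ^ 2 := by
    rw [← real_inner_self_eq_norm_sq, inner_plane]; ring
  rw [inner_plane, coneDir_three] at hlt
  rw [← neg_sub v w, coneDir_zero, coneDir_one]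
  have hs := sin_pi_div_five_pos
  have hc : 0 < cos (π / 5) := by linarith [three_quarters_lt_cos_pi_div_five]
  have hsc : sin (π / 5) ^ 2 + cos (π / 5) ^ 2 = 1 := sin_sq_add_cos_sq _
  generalize sin (π / 5) = s at *
  generalize cos (π / 5) = c at *
  generalize v - w = d at *
  simp only [Matrix.cons_val_zero, Matrix.cons_val_one] at hlt
  -- coordinates of `d` along `coneDir 3 = -(s, c)` and along `(c, -s)`
  set p := -s * d 0 - c * d 1
  set q := c * d 0 - s * d 1
  have hp : c * ‖d‖ < p := by linarith
  have hp₀ : 0 < p := lt_of_le_of_lt (by positivity) hp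
  have hsq : (c * q) ^ 2 < (s * p) ^ 2 := by
    have : (s * p) ^ 2 - (c * q) ^ 2 = p ^ 2 - (c * ‖d‖) ^ 2 := by
      linear_combination (p ^ 2 - c ^ 2 * (d 0 ^ 2 + d 1 ^ 2)) * hsc + c ^ 2 * hnorm
    nlinarith [mul_self_lt_mul_self (by positivity) hp]
  obtain ⟨hq₁, hq₂⟩ := abs_lt.1 (abs_lt_of_sq_lt_sq hsq (by positivity))
  refine ⟨(s * p + c * q) / (2 * s * c), (s * p - c * q) / (2 * s * c),
    div_pos (by linarith) (by positivity), div_pos (by linarith) (by positivity), ?_⟩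
  ext i
  fin_cases i <;>
    simp only [Fin.zero_eta, Fin.mk_one, PiLp.neg_apply, PiLp.add_apply, PiLp.smul_apply,
      smul_eq_mul, Matrix.cons_val_zero, Matrix.cons_val_one, Matrix.cons_val_fin_one, mul_zero,
      mul_one, zero_add] <;>
    field_simp
  · linear_combination d 0 * hsc
  · linear_combination 2 * c ^ 2 * d 0 * hsc

lemma pi_div_ten_le_of_cos_le_cos_sub {α : ℝ} (hα₀ : 0 ≤ α) (h : cos α ≤ cos (π / 5 - α)) :
    π / 10 ≤ α := by
  by_contra! hα
  exact h.not_gt (cos_lt_cos_of_nonneg_of_le_pi hα₀ (by linarith [pi_pos]) (by linarith))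

lemma cos_pi_div_five_mul_sin_le {α : ℝ} (hα₀ : 0 ≤ α) (hα : α ≤ π / 5) :
    cos (π / 5) * sin α ≤ sin (π / 5) * cos α := by
  have := sin_nonneg_of_nonneg_of_le_pi (x := π / 5 - α) (by linarith) (by linarith [pi_pos])
  rw [sin_sub] at this
  linarith

lemma one_sub_cos_pi_div_five_mul_cos_le {α : ℝ} (hα₀ : π / 10 ≤ α) (hα : α ≤ π / 5) :
    (1 - cos (π / 5)) * cos α ≤ sin (π / 5) * sin α := by
  have : cos α ≤ cos (π / 5 - α) :=
    cos_le_cos_of_nonneg_of_le_pi (by linarith) (by linarith [pi_pos]) (by linarith)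
  rw [cos_sub] at this
  linarith

lemma inner_coneDir_lt_of_mem_triangle {α r a b : ℝ} (hα₁ : π / 10 ≤ α) (hα₂ : α ≤ π / 5)
    (hr : 0 < r) (ha : 0 < a) (hb : 0 < b)
    (hab : (a + b) * cos (π / 5) ≤ r * cos (π / 5 - α)) (j : Fin 5) :
    ⟪r • !₂[sin α, cos α] - (a • coneDir 0 + b • coneDir 1), coneDir j⟫_ℝ < r * cos α := by
  have hs := sin_pi_div_five_pos
  have hc := three_quarters_lt_cos_pi_div_five
  have hsc : sin (π / 5) ^ 2 + cos (π / 5) ^ 2 = 1 := sin_sq_add_cos_sq _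
  have hcc := four_mul_cos_pi_div_five_sq
  have hbc : 0 < b * cos (π / 5) ^ 2 := mul_pos hb (pow_pos (by linarith) 2)
  have hy : 0 < r * cos α :=
    mul_pos hr (cos_pos_of_mem_Ioo ⟨by linarith [pi_pos], by linarith [pi_pos]⟩)
  have hxy : cos (π / 5) * (r * sin α) ≤ sin (π / 5) * (r * cos α) := by
    linarith [mul_le_mul_of_nonneg_left (cos_pi_div_five_mul_sin_le (by linarith) hα₂) hr.le]
  have hyx : (1 - cos (π / 5)) * (r * cos α) ≤ sin (π / 5) * (r * sin α) := by
    linarith [mul_le_mul_of_nonneg_left (one_sub_cos_pi_div_five_mul_cos_le hα₁ hα₂) hr.le]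
  replace hab : (a + b) * cos (π / 5) ≤ cos (π / 5) * (r * cos α) + sin (π / 5) * (r * sin α) := by
    rw [cos_sub] at hab; linarith
  fin_cases j <;>
    simp only [Fin.zero_eta, Fin.mk_one, Fin.reduceFinMk, inner_plane, coneDir_zero, coneDir_one,
      coneDir_two, coneDir_three, coneDir_four, PiLp.sub_apply, PiLp.add_apply, PiLp.smul_apply,
      smul_eq_mul, Matrix.cons_val_zero, Matrix.cons_val_one, Matrix.cons_val_fin_one] <;>
    generalize r * sin α = x at * <;>
    generalize r * cos α = y at * <;>
    generalize sin (π / 5) = s at * <;>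
    generalize cos (π / 5) = c at *
  · nlinarith
  · nlinarith [mul_le_mul_of_nonneg_left hxy hs.le]
  · nlinarith
  · nlinarith
  -- the only tight case: for `α = π / 10` the corner of `T_{w,u}` on the ray `-coneDir 1`
  -- lies on the side of the pentagon facing `coneDir 4`
  · have : (y - (a + b * (2 * c ^ 2 - 1))) * (2 * c ^ 2 - 1)
          - ((x - b * (2 * s * c)) * (2 * s * c) + y)
        = (c - 3 / 2) * y - (c - 1 / 2) * a + c * b - 2 * s * c * x := by
      linear_combination 4 * b * c ^ 2 * hsc + ((y - a) / 2 + b * (1 - c - 2 * c ^ 2)) * hcc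
    nlinarith [mul_le_mul_of_nonneg_left hyx (by linarith : (0:ℝ) ≤ 2 * c - 1)]

theorem closest_vertex_triangle_smaller_general (P : Set Plane) (u w v : Plane) (hu : u ∈ P)
    (α r : ℝ) (hα : α ∈ Set.Ioo 0 (Real.pi / 5)) (hr : 0 < r)
    (hwu : w - u = r • (!₂[Real.sin α, Real.cos α] : Plane))
    (hsize : triangleSize u w 0 ≤ triangleSize w u 3)
    (hclosest : isClosest P w 3 v) :
    ∀ j : Fin 5, v ∈ cone u j → triangleSize u v j < triangleSize u w 0 := by
  intro j _
  obtain ⟨hα₀, hα₅⟩ := hα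
  obtain ⟨-, hv, hmin⟩ := hclosest
  obtain ⟨a, b, ha, hb, hwv⟩ := exists_pos_smul_add_smul_of_mem_cone_three hv
  have hc : 0 < cos (π / 5) := by linarith [three_quarters_lt_cos_pi_div_five]
  have hinner_wu (i : Fin 5) :
      ⟪u - w, coneDir i⟫_ℝ = -(r * ⟪(!₂[sin α, cos α] : Plane), coneDir i⟫_ℝ) := by
    rw [← neg_sub, hwu, inner_neg_left, real_inner_smul_left]
  have hab : (a + b) * cos (π / 5) ≤ r * cos (π / 5 - α) := by
    have := hmin u hu (mem_cone_three_of_sub_eq hα₀ (by linarith) hr hwu)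
    rwa [← neg_sub w v, hwv, inner_neg_left, inner_smul_add_smul_coneDir_three, hinner_wu,
      inner_sin_cos_coneDir_three, neg_neg, mul_neg, neg_neg] at this
  have hα₁ : π / 10 ≤ α := by
    rw [triangleSize, triangleSize, div_le_div_iff_of_pos_right hc, hwu, hinner_wu,
      real_inner_smul_left, inner_sin_cos_coneDir_zero, inner_sin_cos_coneDir_three, mul_neg,
      neg_neg] at hsize
    exact pi_div_ten_le_of_cos_le_cos_sub hα₀.le (le_of_mul_le_mul_left hsize hr)
  rw [triangleSize, triangleSize, div_lt_div_iff_of_pos_right hc,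
    show v - u = (w - u) - (w - v) by abel, hwu, hwv, real_inner_smul_left,
    inner_sin_cos_coneDir_zero]
  exact inner_coneDir_lt_of_mem_triangle hα₁ hα₅.le hr ha hb hab j

/-- Let `w ∈ C₀ᵘ` at clockwise angle `α ∈ (0, π/5)` from vertical with
`|T_{w,u}| ≥ |T_{u,w}|`, and let `v ≠ u` be the point of `P` closest to `w` in the cone `C₃ʷ`.
Then `|T_{u,v}| < |T_{u,w}|`. -/
theorem closest_vertex_triangle_smaller (P : Set Plane) (hfin : P.Finite)
    (hgp : GeneralPosition P) (u w v : Plane) (hu : u ∈ P) (hw : w ∈ P) (hv : v ∈ P)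
    (huw : u ≠ w) (α r : ℝ) (hα : α ∈ Set.Ioo 0 (Real.pi / 5)) (hr : 0 < r)
    (hwu : w - u = r • (!₂[Real.sin α, Real.cos α] : Plane))
    (hsize : triangleSize u w 0 ≤ triangleSize w u 3)
    (hclosest : isClosest P w 3 v) (hvu : v ≠ u) :
    ∀ j : Fin 5, v ∈ cone u j → triangleSize u v j < triangleSize u w 0 :=
  closest_vertex_triangle_smaller_general P u w v hu α r hα hr hwu hsize hclosest
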